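/- arXiv:2508.19727 — 6 statements merged into one kernel-verified Lean document; each statement's English description precedes it below -/
import Mathlib

section
/- Let n ≥ 2 be an integer. Suppose t_1, …, t_{n−1} are integers satisfying t_i + t_j + t_k = 0 whenever i, j, k ∈ {1, …, n−1} with i + j + k = n, and t_s + t_{n−s} = 0 for all 1 ≤ s ≤ n−1. Then t_s = 0 for all 1 ≤ s ≤ n−1. -/
/-!
The triple `(1, m, n - 1 - m)` together with the pair relation for `m + 1` gives
`t (m + 1) = t m + t 1`, so `t` is linear: `t s = s • t 1`. The pair relation for `s = 1`
then reads `n • t 1 = 0`, which forces `t 1 = 0` in a torsion-free group.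
-/

variable {G : Type*} [AddCommGroup G]

theorem eq_nsmul_of_succ_eq_add {N : ℕ} {t : ℕ → G}
    (h : ∀ m, 1 ≤ m → m < N → t (m + 1) = t m + t 1) :
    ∀ s, 1 ≤ s → s ≤ N → t s = s • t 1 := by
  intro s hs
  induction s, hs using Nat.le_induction with
  | base => simp
  | succ m hm ih =>
    intro hmN
    rw [h m hm hmN, ih (by omega), succ_nsmul]

theorem succ_eq_add_of_triple_of_pair {n : ℕ} {t : ℕ → G}
    (h1 : ∀ i j k : ℕ, 1 ≤ i → i ≤ n - 1 → 1 ≤ j → j ≤ n - 1 → 1 ≤ k → k ≤ n - 1 →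
      i + j + k = n → t i + t j + t k = 0)
    (h2 : ∀ s : ℕ, 1 ≤ s → s ≤ n - 1 → t s + t (n - s) = 0) :
    ∀ m, 1 ≤ m → m < n - 1 → t (m + 1) = t m + t 1 := by
  intro m hm hmn
  have htriple := h1 1 m (n - 1 - m) le_rfl (by omega) hm hmn.le (by omega) (by omega) (by omega)
  have hpair := h2 (m + 1) (by omega) hmn
  rw [show n - (m + 1) = n - 1 - m by omega] at hpair
  linear_combination (norm := abel) hpair - htriple

theorem eq_zero_of_triple_of_pair [IsAddTorsionFree G] {n : ℕ} {t : ℕ → G}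
    (h1 : ∀ i j k : ℕ, 1 ≤ i → i ≤ n - 1 → 1 ≤ j → j ≤ n - 1 → 1 ≤ k → k ≤ n - 1 →
      i + j + k = n → t i + t j + t k = 0)
    (h2 : ∀ s : ℕ, 1 ≤ s → s ≤ n - 1 → t s + t (n - s) = 0) :
    ∀ s, 1 ≤ s → s ≤ n - 1 → t s = 0 := by
  intro s hs hsn
  have hlin := eq_nsmul_of_succ_eq_add (succ_eq_add_of_triple_of_pair h1 h2)
  have ht1 : t 1 = 0 := by
    have hpair := h2 1 le_rfl (by omega)
    rw [hlin (n - 1) (by omega) le_rfl, ← succ_nsmul', Nat.sub_add_cancel (by omega)] at hpair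
    exact (nsmul_eq_zero_iff_right (by omega)).mp hpair
  rw [hlin s hs hsn, ht1, smul_zero]

theorem stmt_0_general (n : ℕ) (t : ℕ → ℤ)
    (h1 : ∀ i j k : ℕ, 1 ≤ i → i ≤ n - 1 → 1 ≤ j → j ≤ n - 1 → 1 ≤ k → k ≤ n - 1 →
      i + j + k = n → t i + t j + t k = 0)
    (h2 : ∀ s : ℕ, 1 ≤ s → s ≤ n - 1 → t s + t (n - s) = 0) :
    ∀ s : ℕ, 1 ≤ s → s ≤ n - 1 → t s = 0 :=
  eq_zero_of_triple_of_pair h1 h2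

/-- Let `n ≥ 2`. Suppose `t 1, …, t (n-1)` are integers satisfying
`t i + t j + t k = 0` whenever `i + j + k = n` (with `i, j, k ∈ {1, …, n-1}`), and
`t s + t (n - s) = 0` for all `1 ≤ s ≤ n - 1`. Then `t s = 0` for all `1 ≤ s ≤ n - 1`. -/
theorem stmt_0 (n : ℕ) (hn : 2 ≤ n) (t : ℕ → ℤ)
    (h1 : ∀ i j k : ℕ, 1 ≤ i → i ≤ n - 1 → 1 ≤ j → j ≤ n - 1 → 1 ≤ k → k ≤ n - 1 →
      i + j + k = n → t i + t j + t k = 0)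
    (h2 : ∀ s : ℕ, 1 ≤ s → s ≤ n - 1 → t s + t (n - s) = 0) :
    ∀ s : ℕ, 1 ≤ s → s ≤ n - 1 → t s = 0 :=
  stmt_0_general n t h1 h2
end

section
/- Let n ≥ 2. The family of 3(n−1) vectors a(j,i) ∈ ℤ^{V_n}, for j ∈ {1,2,3} and 1 ≤ i ≤ n−1, is linearly independent over ℤ: if integers k_{j,i} satisfy Σ_{j=1}^{3} Σ_{i=1}^{n−1} k_{j,i} · a(j,i) = 0 in ℤ^{V_n}, then k_{j,i} = 0 for all j ∈ {1,2,3} and 1 ≤ i ≤ n−1. -/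
/-- For `n ≥ 2`, `j ∈ {1,2,3}` (as `Fin 3`) and an index `i`, the vector
`a(j,i) ∈ ℤ^{V_n}`, where `V_n` is the set of triples `v` of nonnegative integers
with `v 0 + v 1 + v 2 = n` and each `v j ≤ n - 1`: its value at `v` is `1` if
`v j = n - i` and `0` otherwise. -/
def avec (n : ℕ) (j : Fin 3) (i : ℕ) (v : Fin 3 → ℕ) : ℤ :=
  if v j = n - i then 1 else 0

/-- Let `n ≥ 2`. The family of `3(n-1)` vectors `a(j,i) ∈ ℤ^{V_n}`,
for `j ∈ {1,2,3}` and `1 ≤ i ≤ n-1`, is linearly independent over `ℤ`: if integers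
`k j i` satisfy `∑_{j} ∑_{i=1}^{n-1} k j i • a(j,i) = 0` in `ℤ^{V_n}` (i.e. the sum
vanishes at every `v ∈ V_n`), then `k j i = 0` for all `j` and `1 ≤ i ≤ n-1`. -/
theorem stmt_1 (n : ℕ) (hn : 2 ≤ n) (k : Fin 3 → ℕ → ℤ)
    (hzero : ∀ v : Fin 3 → ℕ, v 0 + v 1 + v 2 = n → (∀ j : Fin 3, v j ≤ n - 1) →
      ∑ j : Fin 3, ∑ i ∈ Finset.Icc 1 (n - 1), k j i * avec n j i v = 0) :
    ∀ j : Fin 3, ∀ i : ℕ, 1 ≤ i → i ≤ n - 1 → k j i = 0 := by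
  have inner : ∀ (j : Fin 3) (v : Fin 3 → ℕ), v j ≤ n - 1 →
      (∑ i ∈ Finset.Icc 1 (n - 1), k j i * avec n j i v) =
        if 1 ≤ v j then k j (n - v j) else 0 := by
    intro j v hv
    by_cases h1 : 1 ≤ v j
    · rw [if_pos h1, Finset.sum_eq_single (n - v j)]
      · have hnn : n - (n - v j) = v j := by omega
        simp [avec, hnn]
      · intro i hi hne
        rw [Finset.mem_Icc] at hi
        unfold avec
        rw [if_neg (by omega)]
        ring
      · intro habs
        exact absurd (Finset.mem_Icc.mpr (by omega)) habs
    · rw [if_neg h1]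
      apply Finset.sum_eq_zero
      intro i hi
      rw [Finset.mem_Icc] at hi
      unfold avec
      rw [if_neg (by omega)]
      ring
  have key : ∀ a b c : ℕ, a + b + c = n → a ≤ n - 1 → b ≤ n - 1 → c ≤ n - 1 →
      (if 1 ≤ a then k 0 (n - a) else 0) + (if 1 ≤ b then k 1 (n - b) else 0) +
        (if 1 ≤ c then k 2 (n - c) else 0) = 0 := by
    intro a b c hs ha hb hc
    have h := hzero ![a, b, c] (by simp; omega)
      (by intro j; fin_cases j <;> simpa)
    rw [Fin.sum_univ_three, inner 0 _ (by simpa), inner 1 _ (by simpa),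
      inner 2 _ (by simpa)] at h
    simp at h
    convert h using 3 <;> split_ifs <;> first | rfl | omega
  have hE01 : ∀ m, 1 ≤ m → m ≤ n - 1 → k 0 (n - m) + k 1 m = 0 := by
    intro m h1 h2
    have h := key m (n - m) 0 (by omega) (by omega) (by omega) (by omega)
    have e : n - (n - m) = m := by omega
    rw [e, if_pos h1, if_pos (by omega : 1 ≤ n - m), if_neg (by omega)] at h
    linarith
  have hE02 : ∀ m, 1 ≤ m → m ≤ n - 1 → k 0 (n - m) + k 2 m = 0 := by
    intro m h1 h2
    have h := key m 0 (n - m) (by omega) (by omega) (by omega) (by omega)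
    have e : n - (n - m) = m := by omega
    rw [e, if_pos h1, if_neg (by omega), if_pos (by omega : 1 ≤ n - m)] at h
    linarith
  have hE12 : ∀ m, 1 ≤ m → m ≤ n - 1 → k 1 (n - m) + k 2 m = 0 := by
    intro m h1 h2
    have h := key 0 m (n - m) (by omega) (by omega) (by omega) (by omega)
    have e : n - (n - m) = m := by omega
    rw [e, if_neg (by omega), if_pos h1, if_pos (by omega : 1 ≤ n - m)] at h
    linarith
  have heq12 : ∀ m, 1 ≤ m → m ≤ n - 1 → k 1 m = k 2 m := by
    intro m h1 h2
    have := hE01 m h1 h2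
    have := hE02 m h1 h2
    linarith
  have heq02 : ∀ m, 1 ≤ m → m ≤ n - 1 → k 0 m = k 2 m := by
    intro m h1 h2
    have h := hE01 (n - m) (by omega) (by omega)
    have e : n - (n - m) = m := by omega
    rw [e] at h
    have := hE12 m h1 h2
    linarith
  have hT : ∀ m, 1 ≤ m → m ≤ n - 2 → k 0 (n - m) + k 1 (m + 1) + k 2 (n - 1) = 0 := by
    intro m h1 h2
    have h := key m (n - m - 1) 1 (by omega) (by omega) (by omega) (by omega)
    have e : n - (n - m - 1) = m + 1 := by omega
    rw [e, if_pos h1, if_pos (by omega : 1 ≤ n - m - 1), if_pos le_rfl] at h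
    linarith
  set C := k 1 (n - 1) with hC
  have hbase : k 1 1 = -C := by
    have h := hE01 (n - 1) (by omega) (by omega)
    have e : n - (n - 1) = 1 := by omega
    rw [e] at h
    have h01 : k 0 1 = k 1 1 := by
      rw [heq02 1 le_rfl (by omega), ← heq12 1 le_rfl (by omega)]
    linarith
  have hstep : ∀ m, 1 ≤ m → m ≤ n - 2 → k 1 (m + 1) = k 1 m - C := by
    intro m h1 h2
    have ht := hT m h1 h2
    have h01 := hE01 m h1 (by omega)
    have h12 := heq12 (n - 1) (by omega) (by omega)
    linarith
  have hlin : ∀ m, 1 ≤ m → m ≤ n - 1 → k 1 m = -(m : ℤ) * C := by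
    intro m
    induction m with
    | zero => omega
    | succ m ih =>
      intro h1 h2
      rcases Nat.eq_zero_or_pos m with hm | hm
      · subst hm
        push_cast
        linarith [hbase]
      · have := ih hm (by omega)
        have := hstep m hm (by omega)
        push_cast
        linarith
  have hCzero : C = 0 := by
    have h := hlin (n - 1) (by omega) le_rfl
    have e : ((n - 1 : ℕ) : ℤ) = (n : ℤ) - 1 := by
      have : (1 : ℕ) ≤ n := by omega
      push_cast [this]
      ring
    rw [e] at h
    have hn' : (2 : ℤ) ≤ (n : ℤ) := by exact_mod_cast hn
    have : (n : ℤ) * C = 0 := by linarith [h]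
    rcases mul_eq_zero.mp this with h' | h'
    · linarith
    · exact h'
  have hk1 : ∀ m, 1 ≤ m → m ≤ n - 1 → k 1 m = 0 := by
    intro m h1 h2
    have := hlin m h1 h2
    rw [hCzero] at this
    simpa using this
  intro j i h1 h2
  fin_cases j
  · show k 0 i = 0
    rw [heq02 i h1 h2, ← heq12 i h1 h2]
    exact hk1 i h1 h2
  · exact hk1 i h1 h2
  · show k 2 i = 0
    rw [← heq12 i h1 h2]
    exact hk1 i h1 h2
end

section
/- Let n ≥ 2. The family of 3(n−1) vectors b(j,i) ∈ ℤ^{V_n}, for j ∈ {1,2,3} and 1 ≤ i ≤ n−1, is linearly independent over ℤ: if integers k_{j,i} satisfy Σ_{j=1}^{3} Σ_{i=1}^{n−1} k_{j,i} · b(j,i) = 0 in ℤ^{V_n}, then k_{j,i} = 0 for all j ∈ {1,2,3} and 1 ≤ i ≤ n−1. -/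
/-- The vector `b(j,i) := (∑_{t=1}^{n-i-1} n (t + i - n) • a(j,t)) + (n - i) • k_j`,
where `k_j(v) = v j` (the sum is empty when `n - i - 1 < 1`). -/
def bvec (n : ℕ) (j : Fin 3) (i : ℕ) (v : Fin 3 → ℕ) : ℤ :=
  (∑ t ∈ Finset.Icc 1 (n - i - 1), (n : ℤ) * ((t : ℤ) + (i : ℤ) - (n : ℤ)) * avec n j t v)
    + ((n : ℤ) - (i : ℤ)) * (v j : ℤ)

/-- Closed form for the value of `b(j,i)` at a point, as a function of `x = v j`. -/
def Tt (n i x : ℕ) : ℤ :=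
  (if i < x then (n : ℤ) * ((i : ℤ) - (x : ℤ)) else 0) + ((n : ℤ) - (i : ℤ)) * (x : ℤ)

lemma bvec_eq (n : ℕ) (hn : 2 ≤ n) (j : Fin 3) (i : ℕ)
    (v : Fin 3 → ℕ) (hv : v j ≤ n - 1) : bvec n j i v = Tt n i (v j) := by
  unfold bvec Tt avec
  congr 1
  have h1 : ∀ t ∈ Finset.Icc 1 (n - i - 1),
      (n : ℤ) * ((t : ℤ) + (i : ℤ) - (n : ℤ)) * (if v j = n - t then 1 else 0)
        = if t = n - v j then (n : ℤ) * ((t : ℤ) + (i : ℤ) - (n : ℤ)) else 0 := by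
    intro t ht
    simp only [Finset.mem_Icc] at ht
    by_cases h : v j = n - t
    · rw [if_pos h, if_pos (by omega), mul_one]
    · rw [if_neg h, if_neg (by omega), mul_zero]
  rw [Finset.sum_congr rfl h1, Finset.sum_ite_eq']
  by_cases h : i < v j
  · rw [if_pos (by simp only [Finset.mem_Icc]; omega), if_pos h]
    have hc : ((n - v j : ℕ) : ℤ) = (n : ℤ) - (v j : ℤ) := by omega
    rw [hc]; ring
  · rw [if_neg (by simp only [Finset.mem_Icc]; omega), if_neg h]

lemma Tt_zero (n i : ℕ) : Tt n i 0 = 0 := by simp [Tt]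

lemma Tt_one (n i : ℕ) (hi : 1 ≤ i) : Tt n i 1 = (n : ℤ) - (i : ℤ) := by
  simp [Tt, show ¬ (i < 1) by omega]

lemma Tt_diff2 (n i y : ℕ) :
    Tt n i (y + 2) - 2 * Tt n i (y + 1) + Tt n i y
      = if i = y + 1 then -(n : ℤ) else 0 := by
  unfold Tt
  rcases Nat.lt_trichotomy i (y + 1) with h | h | h
  · rcases Nat.lt_or_ge i y with h2 | h2
    · simp only [if_pos (show i < y + 2 by omega), if_pos (show i < y + 1 by omega),
        if_pos h2, if_neg (show ¬ i = y + 1 by omega)]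
      push_cast; ring
    · have hiy : i = y := by omega
      subst hiy
      simp only [if_pos (show i < i + 2 by omega), if_pos (show i < i + 1 by omega),
        if_neg (lt_irrefl i), if_neg (show ¬ i = i + 1 by omega)]
      push_cast; ring
  · subst h
    simp only [if_pos (show y + 1 < y + 2 by omega), if_neg (lt_irrefl (y + 1)),
      if_neg (show ¬ y + 1 < y by omega), if_pos rfl]
    push_cast; ring
  · simp only [if_neg (show ¬ i < y + 2 by omega), if_neg (show ¬ i < y + 1 by omega),
      if_neg (show ¬ i < y by omega), if_neg (show ¬ i = y + 1 by omega)]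
    push_cast; ring

/-- Let `n ≥ 2`. The family of `3(n-1)` vectors `b(j,i) ∈ ℤ^{V_n}`,
for `j ∈ {1,2,3}` and `1 ≤ i ≤ n-1`, is linearly independent over `ℤ`: if integers
`k j i` satisfy `∑_{j} ∑_{i=1}^{n-1} k j i • b(j,i) = 0` in `ℤ^{V_n}` (i.e. the sum
vanishes at every `v ∈ V_n`), then `k j i = 0` for all `j` and `1 ≤ i ≤ n-1`. -/
theorem stmt_2 (n : ℕ) (hn : 2 ≤ n) (k : Fin 3 → ℕ → ℤ)
    (hzero : ∀ v : Fin 3 → ℕ, v 0 + v 1 + v 2 = n → (∀ j : Fin 3, v j ≤ n - 1) →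
      ∑ j : Fin 3, ∑ i ∈ Finset.Icc 1 (n - 1), k j i * bvec n j i v = 0) :
    ∀ j : Fin 3, ∀ i : ℕ, 1 ≤ i → i ≤ n - 1 → k j i = 0 := by
  set G : Fin 3 → ℕ → ℤ := fun j x => ∑ i ∈ Finset.Icc 1 (n - 1), k j i * Tt n i x
    with hGdef
  have hnZ : (n : ℤ) ≠ 0 := by positivity
  -- rewrite inner sums
  have hrw : ∀ (j : Fin 3) (v : Fin 3 → ℕ), v j ≤ n - 1 →
      ∑ i ∈ Finset.Icc 1 (n - 1), k j i * bvec n j i v = G j (v j) := by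
    intro j v hv
    refine Finset.sum_congr rfl ?_
    intro i hi
    rw [bvec_eq n hn j i v hv]
  have hGsum : ∀ a b c : ℕ, a ≤ n - 1 → b ≤ n - 1 → c ≤ n - 1 → a + b + c = n →
      G 0 a + G 1 b + G 2 c = 0 := by
    intro a b c ha hb hc habc
    have h := hzero ![a, b, c] (by simpa using habc)
      (by intro j; fin_cases j <;> simpa)
    rw [Fin.sum_univ_three] at h
    rw [hrw 0 ![a, b, c] (by simpa), hrw 1 ![a, b, c] (by simpa),
      hrw 2 ![a, b, c] (by simpa)] at h
    simpa using h
  have hG0 : ∀ j : Fin 3, G j 0 = 0 := by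
    intro j; simp [hGdef, Tt_zero]
  -- relations from triples with a zero coordinate
  have h02 : ∀ x, 1 ≤ x → x ≤ n - 1 → G 0 x + G 2 (n - x) = 0 := by
    intro x h1 h2
    have h := hGsum x 0 (n - x) h2 (by omega) (by omega) (by omega)
    rw [hG0 1] at h; linarith
  have h12 : ∀ x, 1 ≤ x → x ≤ n - 1 → G 1 x + G 2 (n - x) = 0 := by
    intro x h1 h2
    have h := hGsum 0 x (n - x) (by omega) h2 (by omega) (by omega)
    rw [hG0 0] at h; linarith
  have h01 : ∀ x, 1 ≤ x → x ≤ n - 1 → G 0 x + G 1 (n - x) = 0 := by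
    intro x h1 h2
    have h := hGsum x (n - x) 0 h2 (by omega) (by omega) (by omega)
    rw [hG0 2] at h; linarith
  have hEq01 : ∀ x, 1 ≤ x → x ≤ n - 1 → G 1 x = G 0 x := by
    intro x h1 h2
    have a := h02 x h1 h2
    have b := h12 x h1 h2
    linarith
  have hanti : ∀ x, 1 ≤ x → x ≤ n - 1 → G 0 x + G 0 (n - x) = 0 := by
    intro x h1 h2
    have a := h01 x h1 h2
    have b := hEq01 (n - x) (by omega) (by omega)
    linarith
  have hEq02 : ∀ x, 1 ≤ x → x ≤ n - 1 → G 2 x = G 0 x := by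
    intro x h1 h2
    have a := h02 (n - x) (by omega) (by omega)
    have b := hanti (n - x) (by omega) (by omega)
    have hx : n - (n - x) = x := by omega
    rw [hx] at a b
    linarith
  -- recurrence from triples (1, x, n-1-x)
  have hrec : ∀ x, 1 ≤ x → x + 1 ≤ n - 1 → G 0 (x + 1) = G 0 x + G 0 1 := by
    intro x h1 h2
    have h := hGsum 1 x (n - 1 - x) (by omega) (by omega) (by omega) (by omega)
    have e1 : G 1 x = G 0 x := hEq01 x h1 (by omega)
    have e2 : G 2 (n - 1 - x) = G 0 (n - 1 - x) := hEq02 (n - 1 - x) (by omega) (by omega)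
    have e3 : G 0 (x + 1) + G 0 (n - (x + 1)) = 0 := hanti (x + 1) (by omega) h2
    have hx : n - (x + 1) = n - 1 - x := by omega
    rw [hx] at e3
    linarith
  have hlin : ∀ x, 1 ≤ x → x ≤ n - 1 → G 0 x = (x : ℤ) * G 0 1 := by
    intro x
    induction x with
    | zero => omega
    | succ y ih =>
      intro h1 h2
      rcases Nat.eq_or_lt_of_le h1 with h | h
      · rw [← h]; push_cast; ring
      · have hy1 : 1 ≤ y := by omega
        rw [hrec y hy1 h2, ih hy1 (by omega)]
        push_cast; ring
  have hG1 : G 0 1 = 0 := by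
    have a := hanti 1 (by omega) (by omega)
    have b := hlin (n - 1) (by omega) (by omega)
    have hc : ((n - 1 : ℕ) : ℤ) = (n : ℤ) - 1 := by omega
    rw [b, hc] at a
    have : (n : ℤ) * G 0 1 = 0 := by linarith
    rcases mul_eq_zero.mp this with h | h
    · exact absurd h hnZ
    · exact h
  have hGzero : ∀ (j : Fin 3) (x : ℕ), x ≤ n - 1 → G j x = 0 := by
    intro j x hx
    rcases Nat.eq_zero_or_pos x with h | h
    · rw [h]; exact hG0 j
    · have h0 : G 0 x = 0 := by rw [hlin x h hx, hG1, mul_zero]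
      fin_cases j
      · exact h0
      · show G 1 x = 0
        rw [hEq01 x h hx]; exact h0
      · show G 2 x = 0
        rw [hEq02 x h hx]; exact h0
  -- recover middle coefficients via second differences
  have hk_mid : ∀ (j : Fin 3) (y : ℕ), y + 2 ≤ n - 1 → k j (y + 1) = 0 := by
    intro j y hy
    have hcomb : G j (y + 2) - 2 * G j (y + 1) + G j y = k j (y + 1) * (-(n : ℤ)) := by
      have step : ∀ i ∈ Finset.Icc 1 (n - 1),
          k j i * Tt n i (y + 2) - 2 * (k j i * Tt n i (y + 1)) + k j i * Tt n i y
            = if i = y + 1 then k j i * (-(n : ℤ)) else 0 := by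
        intro i hi
        have e : k j i * Tt n i (y + 2) - 2 * (k j i * Tt n i (y + 1)) + k j i * Tt n i y
            = k j i * (Tt n i (y + 2) - 2 * Tt n i (y + 1) + Tt n i y) := by ring
        rw [e, Tt_diff2, mul_ite, mul_zero]
      have hsplit :
          ∑ i ∈ Finset.Icc 1 (n - 1),
            (k j i * Tt n i (y + 2) - 2 * (k j i * Tt n i (y + 1)) + k j i * Tt n i y)
          = G j (y + 2) - 2 * G j (y + 1) + G j y := by
        simp only [hGdef]
        rw [Finset.sum_add_distrib, Finset.sum_sub_distrib, ← Finset.mul_sum]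
      rw [← hsplit, Finset.sum_congr rfl step, Finset.sum_ite_eq',
        if_pos (by simp only [Finset.mem_Icc]; omega)]
    rw [hGzero j (y + 2) hy, hGzero j (y + 1) (by omega), hGzero j y (by omega)] at hcomb
    have : k j (y + 1) * (n : ℤ) = 0 := by linarith
    rcases mul_eq_zero.mp this with h | h
    · exact h
    · exact absurd h hnZ
  -- top coefficient
  have hk_top : ∀ j : Fin 3, k j (n - 1) = 0 := by
    intro j
    have h1 : G j 1 = 0 := hGzero j 1 (by omega)
    have h2 : G j 1 = k j (n - 1) := by
      simp only [hGdef]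
      rw [Finset.sum_eq_single_of_mem (n - 1) (by simp only [Finset.mem_Icc]; omega)]
      · rw [Tt_one n (n - 1) (by omega)]
        have hc : ((n - 1 : ℕ) : ℤ) = (n : ℤ) - 1 := by omega
        rw [hc]; ring
      · intro i hi hne
        simp only [Finset.mem_Icc] at hi
        have : i + 1 + 1 ≤ n := by omega
        have hz : k j i = 0 := by
          have := hk_mid j (i - 1) (by omega)
          rwa [show i - 1 + 1 = i by omega] at this
        rw [hz, zero_mul]
    rw [h1] at h2; exact h2.symm
  intro j i hi1 hi2
  rcases Nat.lt_or_ge i (n - 1) with h | h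
  · have := hk_mid j (i - 1) (by omega)
    rwa [show i - 1 + 1 = i by omega] at this
  · have : i = n - 1 := by omega
    rw [this]; exact hk_top j
end

section
/- Let r ≥ 1 and let (k_1, …, k_r) and (l_1, …, l_r) be sequences of positive integers such that k_i divides k_{i+1} and l_i divides l_{i+1} for all 1 ≤ i ≤ r−1. If for every positive integer m one has Π_{i=1}^{r} (m / gcd(k_i, m)) = Π_{i=1}^{r} (m / gcd(l_i, m)), then k_i = l_i for all 1 ≤ i ≤ r. -/
open Finset

private lemma chain_dvd_aux (k : ℕ → ℕ) (r : ℕ) (h : ∀ i, i + 1 < r → k i ∣ k (i + 1)) :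
    ∀ i j, i ≤ j → j < r → k i ∣ k j := by
  intro i j hij hjr
  induction j with
  | zero => simpa [Nat.le_zero.mp hij] using dvd_refl (k 0)
  | succ j ih =>
    rcases Nat.eq_or_lt_of_le hij with h1 | h1
    · simp [h1]
    · exact dvd_trans (ih (Nat.lt_succ_iff.mp h1) (Nat.lt_of_succ_lt hjr)) (h j hjr)

private lemma eq_of_prod_eq_of_dvd (s : Finset ℕ) (a b : ℕ → ℕ)
    (hd : ∀ i ∈ s, a i ∣ b i) (hb : ∀ i ∈ s, 0 < b i)
    (h : ∏ i ∈ s, a i = ∏ i ∈ s, b i) : ∀ i ∈ s, a i = b i := by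
  intro i hi
  by_contra hne
  have hle : ∀ j ∈ s, a j ≤ b j := fun j hj => Nat.le_of_dvd (hb j hj) (hd j hj)
  have hpos : ∀ j ∈ s, 0 < a j := fun j hj =>
    Nat.pos_of_dvd_of_pos (hd j hj) (hb j hj)
  have : ∏ j ∈ s, a j < ∏ j ∈ s, b j :=
    Finset.prod_lt_prod hpos hle ⟨i, hi, lt_of_le_of_ne (hle i hi) hne⟩
  omega

private lemma gcd_prod_eq (r : ℕ) (k l : ℕ → ℕ) (m : ℕ) (hm : 0 < m)
    (hprod : ∏ i ∈ Finset.range r, m / Nat.gcd (k i) m =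
        ∏ i ∈ Finset.range r, m / Nat.gcd (l i) m) :
    ∏ i ∈ Finset.range r, Nat.gcd (k i) m = ∏ i ∈ Finset.range r, Nat.gcd (l i) m := by
  have key : ∀ f : ℕ → ℕ,
      (∏ i ∈ range r, m / Nat.gcd (f i) m) * (∏ i ∈ range r, Nat.gcd (f i) m) = m ^ r := by
    intro f
    rw [← Finset.prod_mul_distrib]
    rw [Finset.prod_congr rfl (fun i _ => Nat.div_mul_cancel (Nat.gcd_dvd_right (f i) m))]
    simp
  have hpos : 0 < ∏ i ∈ range r, m / Nat.gcd (k i) m :=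
    Finset.prod_pos fun i _ => Nat.div_pos (Nat.le_of_dvd hm (Nat.gcd_dvd_right _ _))
      (Nat.gcd_pos_of_pos_right _ hm)
  have := (key k).trans (key l).symm
  rw [hprod] at this
  exact Nat.eq_of_mul_eq_mul_left (hprod ▸ hpos) this

private lemma stmt_3_aux : ∀ r : ℕ, ∀ k l : ℕ → ℕ,
    (∀ i < r, 0 < k i) → (∀ i < r, 0 < l i) →
    (∀ i, i + 1 < r → k i ∣ k (i + 1)) →
    (∀ i, i + 1 < r → l i ∣ l (i + 1)) →
    (∀ m : ℕ, 0 < m →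
      ∏ i ∈ Finset.range r, m / Nat.gcd (k i) m =
        ∏ i ∈ Finset.range r, m / Nat.gcd (l i) m) →
    ∀ i < r, k i = l i := by
  intro r
  induction r with
  | zero => intro k l _ _ _ _ _ i hi; omega
  | succ r ih =>
    intro k l hkpos hlpos hkdvd hldvd hprod
    have hkd : ∀ i, i ≤ r → k i ∣ k r := fun i hi =>
      chain_dvd_aux k (r+1) hkdvd i r hi (Nat.lt_succ_self r)
    have hld : ∀ i, i ≤ r → l i ∣ l r := fun i hi =>
      chain_dvd_aux l (r+1) hldvd i r hi (Nat.lt_succ_self r)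
    have hkr : 0 < k r := hkpos r (Nat.lt_succ_self r)
    have hlr : 0 < l r := hlpos r (Nat.lt_succ_self r)
    -- product equality: ∏ k_i = ∏ l_i using m = k r * l r
    have hm0 : 0 < k r * l r := Nat.mul_pos hkr hlr
    have hPP : ∏ i ∈ range (r+1), k i = ∏ i ∈ range (r+1), l i := by
      have h1 := gcd_prod_eq (r+1) k l (k r * l r) hm0 (hprod _ hm0)
      have ek : ∀ i ∈ range (r+1), Nat.gcd (k i) (k r * l r) = k i := fun i hi =>
        Nat.gcd_eq_left ((hkd i (Nat.lt_succ_iff.mp (mem_range.mp hi))).trans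
          (Dvd.intro _ rfl))
      have el : ∀ i ∈ range (r+1), Nat.gcd (l i) (k r * l r) = l i := fun i hi =>
        Nat.gcd_eq_left ((hld i (Nat.lt_succ_iff.mp (mem_range.mp hi))).trans
          (Dvd.intro_left _ rfl))
      rw [Finset.prod_congr rfl ek, Finset.prod_congr rfl el] at h1
      exact h1
    -- l i ∣ k r for all i
    have hlk : ∀ i ∈ range (r+1), l i ∣ k r := by
      have h1 := gcd_prod_eq (r+1) k l (k r) hkr (hprod _ hkr)
      have ek : ∀ i ∈ range (r+1), Nat.gcd (k i) (k r) = k i := fun i hi =>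
        Nat.gcd_eq_left (hkd i (Nat.lt_succ_iff.mp (mem_range.mp hi)))
      rw [Finset.prod_congr rfl ek, hPP] at h1
      intro i hi
      have := eq_of_prod_eq_of_dvd (range (r+1)) (fun j => Nat.gcd (l j) (k r)) l
        (fun j _ => Nat.gcd_dvd_left _ _)
        (fun j hj => hlpos j (mem_range.mp hj)) h1.symm i hi
      exact this ▸ Nat.gcd_dvd_right _ _
    have hkl : ∀ i ∈ range (r+1), k i ∣ l r := by
      have h1 := gcd_prod_eq (r+1) k l (l r) hlr (hprod _ hlr)
      have el : ∀ i ∈ range (r+1), Nat.gcd (l i) (l r) = l i := fun i hi =>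
        Nat.gcd_eq_left (hld i (Nat.lt_succ_iff.mp (mem_range.mp hi)))
      rw [Finset.prod_congr rfl el, ← hPP] at h1
      intro i hi
      have := eq_of_prod_eq_of_dvd (range (r+1)) (fun j => Nat.gcd (k j) (l r)) k
        (fun j _ => Nat.gcd_dvd_left _ _)
        (fun j hj => hkpos j (mem_range.mp hj)) h1 i hi
      exact this ▸ Nat.gcd_dvd_right _ _
    have htop : k r = l r :=
      Nat.dvd_antisymm (hkl r (self_mem_range_succ r)) (hlk r (self_mem_range_succ r))
    -- cancel last factor
    have hprod' : ∀ m : ℕ, 0 < m →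
        ∏ i ∈ Finset.range r, m / Nat.gcd (k i) m =
          ∏ i ∈ Finset.range r, m / Nat.gcd (l i) m := by
      intro m hm
      have h := hprod m hm
      rw [Finset.prod_range_succ, Finset.prod_range_succ, htop] at h
      have hpos : 0 < m / Nat.gcd (l r) m :=
        Nat.div_pos (Nat.le_of_dvd hm (Nat.gcd_dvd_right _ _)) (Nat.gcd_pos_of_pos_right _ hm)
      exact Nat.eq_of_mul_eq_mul_right hpos h
    intro i hi
    rcases Nat.lt_succ_iff_lt_or_eq.mp hi with h | h
    · exact ih k l (fun j hj => hkpos j (Nat.lt_succ_of_lt hj))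
        (fun j hj => hlpos j (Nat.lt_succ_of_lt hj))
        (fun j hj => hkdvd j (Nat.lt_succ_of_lt hj))
        (fun j hj => hldvd j (Nat.lt_succ_of_lt hj)) hprod' i h
    · exact h ▸ htop

/-- Let `r ≥ 1` and let `(k 0, …, k (r-1))` and `(l 0, …, l (r-1))`
be sequences of positive integers such that `k i ∣ k (i+1)` and `l i ∣ l (i+1)` for
all consecutive indices below `r`. If for every positive integer `m` one has
`∏_{i<r} (m / gcd (k i) m) = ∏_{i<r} (m / gcd (l i) m)` (exact integer quotients),
then `k i = l i` for all `i < r`. -/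
theorem stmt_3 (r : ℕ) (hr : 1 ≤ r) (k l : ℕ → ℕ)
    (hkpos : ∀ i < r, 0 < k i) (hlpos : ∀ i < r, 0 < l i)
    (hkdvd : ∀ i, i + 1 < r → k i ∣ k (i + 1))
    (hldvd : ∀ i, i + 1 < r → l i ∣ l (i + 1))
    (hprod : ∀ m : ℕ, 0 < m →
      ∏ i ∈ Finset.range r, m / Nat.gcd (k i) m =
        ∏ i ∈ Finset.range r, m / Nat.gcd (l i) m) :
    ∀ i < r, k i = l i := by
  exact stmt_3_aux r k l hkpos hlpos hkdvd hldvd hprod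
end

section
/- Let ω be a nonzero complex number such that ω² has finite multiplicative order N, and set η = ω^{N²}. Then for every integer m ≥ 1 and every x ∈ ℂ, Π_{r=1}^{m} (1 + η^{2r−1} x^N) = Π_{r=1}^{Nm} (1 + ω^{2r−1} x). -/
open Finset Polynomial

/-- For a primitive `N`-th root of unity `ζ` in `ℂ`, `∏_{i<N} (y - ζ^i) = y^N - 1`. -/
lemma aux_prod_sub (ζ : ℂ) (N : ℕ) (hN : 0 < N) (h : IsPrimitiveRoot ζ N) (y : ℂ) :
    ∏ i ∈ Finset.range N, (y - ζ ^ i) = y ^ N - 1 := by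
  have himg : (Finset.range N).image (ζ ^ ·) = Polynomial.nthRootsFinset N (1 : ℂ) := by
    apply Finset.eq_of_subset_of_card_le
    · intro z hz
      simp only [Finset.mem_image, Finset.mem_range] at hz
      obtain ⟨i, _, rfl⟩ := hz
      exact (Polynomial.mem_nthRootsFinset hN (1 : ℂ)).2 (by
        rw [← pow_mul, mul_comm, pow_mul, h.pow_eq_one, one_pow])
    · rw [h.card_nthRootsFinset, Finset.card_image_of_injOn]
      · simp
      · intro i hi j hj hij
        exact h.pow_inj (Finset.mem_range.1 (by simpa using hi))
          (Finset.mem_range.1 (by simpa using hj)) hij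
  have hinj : Set.InjOn (ζ ^ ·) (Finset.range N : Set ℕ) := by
    intro i hi j hj hij
    exact h.pow_inj (by simpa using hi) (by simpa using hj) hij
  have := congrArg (Polynomial.eval y) (Polynomial.X_pow_sub_one_eq_prod hN h)
  simp only [Polynomial.eval_sub, Polynomial.eval_pow, Polynomial.eval_X,
    Polynomial.eval_one, Polynomial.eval_prod, Polynomial.eval_C] at this
  rw [this, ← himg, Finset.prod_image hinj]

/-- For a primitive `N`-th root of unity `ζ` in `ℂ`, `∏_{i<N} (1 + ζ^i t) = 1 - (-t)^N`. -/
lemma aux_prod_one_add (ζ : ℂ) (N : ℕ) (hN : 0 < N) (h : IsPrimitiveRoot ζ N) (t : ℂ) :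
    ∏ i ∈ Finset.range N, (1 + ζ ^ i * t) = 1 - (-t) ^ N := by
  rcases eq_or_ne t 0 with rfl | ht
  · simp [zero_pow hN.ne']
  · have hfac : ∀ i ∈ Finset.range N, 1 + ζ ^ i * t = (-t) * ((-t⁻¹) - ζ ^ i) := by
      intro i _
      field_simp
      ring
    rw [Finset.prod_congr rfl hfac, Finset.prod_mul_distrib, Finset.prod_const,
      Finset.card_range, aux_prod_sub ζ N hN h, mul_sub, ← mul_pow, neg_mul_neg,
      mul_inv_cancel₀ ht, one_pow, mul_one]

/-- Let `ω` be a nonzero complex number such that `ω²` has finite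
multiplicative order `N`, and set `η = ω^{N²}`. Then for every integer `m ≥ 1` and
every `x ∈ ℂ`, `∏_{r=1}^{m} (1 + η^{2r-1} x^N) = ∏_{r=1}^{Nm} (1 + ω^{2r-1} x)`. -/
theorem stmt_7 (ω : ℂ) (hω : ω ≠ 0) (N : ℕ) (hN : 0 < N)
    (horder : orderOf (ω ^ 2) = N) (m : ℕ) (hm : 1 ≤ m) (x : ℂ) :
    ∏ r ∈ Finset.Icc 1 m, (1 + (ω ^ (N ^ 2)) ^ (2 * r - 1) * x ^ N) =
      ∏ r ∈ Finset.Icc 1 (N * m), (1 + ω ^ (2 * r - 1) * x) := by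
  set ζ := ω ^ 2 with hζ
  have hprim : IsPrimitiveRoot ζ N := horder ▸ IsPrimitiveRoot.orderOf ζ
  have hζN : ζ ^ N = 1 := hprim.pow_eq_one
  set η := ω ^ (N ^ 2) with hη
  -- η² = 1
  have hη2 : η ^ 2 = 1 := by
    have h1 : η ^ 2 = (ζ ^ N) ^ N := by rw [hη, hζ]; ring
    rw [h1, hζN, one_pow]
  -- η = (-1)^(N+1) * ω^N
  have hηval : η = (-1 : ℂ) ^ (N + 1) * ω ^ N := by
    have key : ζ ^ (N * (N - 1) / 2) = (-1 : ℂ) ^ (N + 1) := by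
      rcases Nat.even_or_odd N with he | ho
      · obtain ⟨k, hk⟩ := he
        have hkpos : 0 < k := by omega
        have hhalf : ζ ^ k = -1 := by
          have h2k : (ζ ^ k) ^ 2 = 1 := by
            rw [← pow_mul]
            have hkN : k * 2 = N := by omega
            rw [hkN, hζN]
          rcases sq_eq_one_iff.1 h2k with hc | hc
          · exfalso
            have hdvd := hprim.dvd_of_pow_eq_one k hc
            have := Nat.le_of_dvd hkpos hdvd
            omega
          · exact hc
        have harith : N * (N - 1) / 2 = k * (N - 1) := by
          have h1 : N * (N - 1) = k * (N - 1) * 2 := by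
            have : N = 2 * k := by omega
            rw [this]; ring
          rw [h1, Nat.mul_div_cancel _ (by norm_num)]
        rw [harith, pow_mul, hhalf,
          Odd.neg_one_pow ⟨k - 1, by omega⟩, Odd.neg_one_pow ⟨k, by omega⟩]
      · obtain ⟨k, hk⟩ := ho
        have harith : N * (N - 1) / 2 = N * k := by
          have h1 : N - 1 = 2 * k := by omega
          rw [h1, show N * (2 * k) = N * k * 2 by ring,
            Nat.mul_div_cancel _ (by norm_num)]
        rw [harith, pow_mul, hζN, one_pow,
          Even.neg_one_pow ⟨k + 1, by omega⟩]
    have hexp : η = ζ ^ (N * (N - 1) / 2) * ω ^ N := by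
      rw [hη, hζ, ← pow_mul, ← pow_add]
      congr 1
      have hdvd : 2 ∣ N * (N - 1) := by
        rcases Nat.even_or_odd N with h | h
        · exact Dvd.dvd.mul_right h.two_dvd _
        · exact Dvd.dvd.mul_left (Nat.Odd.sub_odd h odd_one).two_dvd _
      have h1 : N * (N - 1) / 2 * 2 = N * (N - 1) := Nat.div_mul_cancel hdvd
      have h2 : N ^ 2 = N * (N - 1) + N := by
        rcases N with _ | n
        · omega
        · simp only [Nat.succ_sub_one, pow_two]; ring
      omega
    rw [hexp, key]
  -- every factor on the LHS is 1 + η x^N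
  have hlhs : ∀ r ∈ Finset.Icc 1 m, (1 + η ^ (2 * r - 1) * x ^ N) = 1 + η * x ^ N := by
    intro r hr
    have hr1 : 1 ≤ r := (Finset.mem_Icc.1 hr).1
    have h1 : η ^ (2 * r - 1) = η := by
      have h2 : 2 * r - 1 = 2 * (r - 1) + 1 := by omega
      rw [h2, pow_add, pow_mul, hη2, one_pow, pow_one, one_mul]
    rw [h1]
  -- a single block of the RHS
  have hblock : ∀ k : ℕ, ∏ s ∈ Finset.Ioc 0 N, (1 + ω ^ (2 * (N * k + s) - 1) * x)
      = 1 + η * x ^ N := by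
    intro k
    have hshift : ∀ s ∈ Finset.Ioc 0 N,
        (1 + ω ^ (2 * (N * k + s) - 1) * x) = 1 + ω ^ (2 * s - 1) * x := by
      intro s hs
      have hs1 : 1 ≤ s := (Finset.mem_Ioc.1 hs).1
      have harith : 2 * (N * k + s) - 1 = 2 * (N * k) + (2 * s - 1) := by omega
      rw [harith, pow_add]
      have h1 : ω ^ (2 * (N * k)) = (ζ ^ N) ^ k := by rw [hζ]; ring
      rw [h1, hζN, one_pow, one_mul]
    rw [Finset.prod_congr rfl hshift]
    -- reindex Ioc 0 N as range N
    have hset : Finset.Ioc 0 N = Finset.Ico 1 (N + 1) := by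
      ext a; simp; omega
    have hreidx : ∏ s ∈ Finset.Ioc 0 N, (1 + ω ^ (2 * s - 1) * x)
        = ∏ i ∈ Finset.range N, (1 + ζ ^ i * (ω * x)) := by
      rw [hset, Finset.prod_Ico_eq_prod_range]
      simp only [Nat.add_sub_cancel]
      apply Finset.prod_congr rfl
      intro i _
      have h2 : 2 * (1 + i) - 1 = 2 * i + 1 := by omega
      rw [h2, hζ]
      ring
    rw [hreidx, aux_prod_one_add ζ N hN hprim (ω * x), hηval]
    have h3 : (-(ω * x)) ^ N = (-1 : ℂ) ^ N * ω ^ N * x ^ N := by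
      rw [show -(ω * x) = (-1 : ℂ) * ω * x by ring]
      rw [mul_pow, mul_pow]
    rw [h3, pow_succ]
    ring
  -- RHS over Ioc 0 (N*m) by induction
  have hrhs : ∀ n : ℕ, ∏ r ∈ Finset.Ioc 0 (N * n), (1 + ω ^ (2 * r - 1) * x)
      = (1 + η * x ^ N) ^ n := by
    intro n
    induction n with
    | zero => simp
    | succ k ih =>
      have h1 : N * k ≤ N * (k + 1) := by nlinarith
      rw [← Finset.prod_Ioc_consecutive _ (Nat.zero_le _) h1, ih, pow_succ]
      congr 1
      have hmap : Finset.Ioc (N * k) (N * (k + 1)) =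
          (Finset.Ioc 0 N).map (addLeftEmbedding (N * k)) := by
        rw [Finset.map_add_left_Ioc]
        congr 1 <;> omega
      rw [hmap, Finset.prod_map]
      simpa [addLeftEmbedding] using hblock k
  have hset2 : Finset.Icc 1 (N * m) = Finset.Ioc 0 (N * m) := by
    ext a; simp; omega
  rw [Finset.prod_congr rfl hlhs, Finset.prod_const, Nat.card_Icc, hset2, hrhs m]
  congr 1
end

section
/- Let ω be a nonzero complex number such that ω² has finite multiplicative order N, and set η = ω^{N²}. Let V be a finite-dimensional complex vector space and let A be a linear endomorphism of V such that A^N = c · id_V for some c ∈ ℂ with c ≠ −η. Then for every integer r, the endomorphism id_V + ω^{2r−1} · A is invertible. -/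
/-!
With `z = ω^(2r-1)`, the geometric series in `-z • A` shows that `1 + z • A` is invertible as soon
as `(-z • A)^N = ((-z)^N c) • 1` differs from `1`. Since `ω^(2N) = 1` we have `(-z)^N (-ω)^N = 1`,
so `(-z)^N c = 1` would force `c = (-ω)^N`; and `(-ω)^N = -ω^(N²)` because `ω^N = ±1`, with
`ω^N = -1` when `N` is even (otherwise the order of `ω²` would divide `N / 2`).
-/

open Finset in
theorem isUnit_one_sub_of_isUnit_one_sub_pow {R : Type*} [Ring R] {x : R} {n : ℕ}
    (h : IsUnit (1 - x ^ n)) : IsUnit (1 - x) := by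
  have hcomm : Commute (1 - x) (∑ i ∈ range n, x ^ i) :=
    (mul_neg_geom_sum x n).trans (geom_sum_mul_neg x n).symm
  exact (hcomm.isUnit_mul_iff.mp (by rwa [mul_neg_geom_sum])).1

theorem neg_pow_eq_neg_pow_sq_of_orderOf_sq {R : Type*} [CommRing R] [NoZeroDivisors R]
    {ω : R} {N : ℕ} (hN : 0 < N) (horder : orderOf (ω ^ 2) = N) :
    (-ω) ^ N = -ω ^ (N ^ 2) := by
  have hsq : ω ^ N * ω ^ N = 1 := by
    rw [← pow_add, ← two_mul, pow_mul, ← horder, pow_orderOf_eq_one]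
  rw [neg_pow, sq, pow_mul]
  rcases Nat.even_or_odd N with ⟨m, hm⟩ | ⟨m, hm⟩
  · have hne : ω ^ N ≠ 1 := fun h1 => by
      have : (ω ^ 2) ^ m = 1 := by rw [← pow_mul, two_mul, ← hm, h1]
      have := Nat.le_of_dvd (by omega) (horder ▸ orderOf_dvd_of_pow_eq_one this)
      omega
    rw [(mul_self_eq_one_iff.mp hsq).resolve_left hne, Even.neg_one_pow ⟨m, hm⟩, one_mul]
  · generalize ω ^ N = w at hsq ⊢
    rw [hm, Odd.neg_one_pow ⟨m, rfl⟩, pow_succ w, pow_mul, sq, hsq, one_pow, one_mul, neg_one_mul]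

theorem zpow_two_mul_sub_one_pow_mul_pow {G₀ : Type*} [GroupWithZero G₀] {ω : G₀} (hω : ω ≠ 0)
    {N : ℕ} (h : (ω ^ 2) ^ N = 1) (r : ℤ) : (ω ^ (2 * r - 1)) ^ N * ω ^ N = 1 := by
  rw [← zpow_natCast (ω ^ (2 * r - 1)), ← zpow_natCast ω N, ← zpow_mul, ← zpow_add₀ hω,
    show (2 * r - 1) * (N : ℤ) + N = ((2 * N : ℕ) : ℤ) * r by push_cast; ring,
    zpow_mul, zpow_natCast, pow_mul, h, one_zpow]

theorem stmt_8_general (ω : ℂ) (N : ℕ) (hN : 0 < N)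
    (horder : orderOf (ω ^ 2) = N)
    (V : Type*) [AddCommGroup V] [Module ℂ V]
    (A : Module.End ℂ V) (c : ℂ) (hc : c ≠ -(ω ^ (N ^ 2)))
    (hA : A ^ N = c • (1 : Module.End ℂ V)) (r : ℤ) :
    IsUnit ((1 : Module.End ℂ V) + ω ^ (2 * r - 1) • A) := by
  set z := ω ^ (2 * r - 1)
  have hω : ω ≠ 0 :=
    (pow_ne_zero_iff two_ne_zero).mp (orderOf_pos_iff.mp (horder ▸ hN)).isUnit.ne_zero
  have hzω : (-z) ^ N * (-ω) ^ N = 1 := by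
    rw [← mul_pow, neg_mul_neg, mul_pow,
      zpow_two_mul_sub_one_pow_mul_pow hω (horder ▸ pow_orderOf_eq_one (ω ^ 2)) r]
  have hscalar : (-z) ^ N * c ≠ 1 := fun h => hc <| by
    rw [← neg_pow_eq_neg_pow_sq_of_orderOf_sq hN horder]
    linear_combination (-ω) ^ N * h - c * hzω
  have hpow : (-(z • A)) ^ N = algebraMap ℂ (Module.End ℂ V) ((-z) ^ N * c) := by
    rw [← neg_smul, smul_pow, hA, smul_smul, Algebra.algebraMap_eq_smul_one]
  rw [← sub_neg_eq_add]
  refine isUnit_one_sub_of_isUnit_one_sub_pow (n := N) ?_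
  rw [hpow, ← map_one (algebraMap ℂ _), ← map_sub]
  exact (sub_ne_zero.mpr hscalar.symm).isUnit.map _

/-- Let `ω` be a nonzero complex number such that `ω²` has finite
multiplicative order `N`, and set `η = ω^{N²}`. Let `V` be a finite-dimensional
complex vector space and `A` a linear endomorphism of `V` with `A^N = c • id_V` for
some `c ∈ ℂ` with `c ≠ -η`. Then for every integer `r`, the endomorphism
`id_V + ω^{2r-1} • A` is invertible. -/
theorem stmt_8 (ω : ℂ) (hω : ω ≠ 0) (N : ℕ) (hN : 0 < N)
    (horder : orderOf (ω ^ 2) = N)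
    (V : Type*) [AddCommGroup V] [Module ℂ V] [FiniteDimensional ℂ V]
    (A : Module.End ℂ V) (c : ℂ) (hc : c ≠ -(ω ^ (N ^ 2)))
    (hA : A ^ N = c • (1 : Module.End ℂ V)) (r : ℤ) :
    IsUnit ((1 : Module.End ℂ V) + ω ^ (2 * r - 1) • A) :=
  stmt_8_general ω N hN horder V A c hc hA r
end
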